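/- Let F : X → Y be a branched function with transfer operator Φ. If (ψ_m)_{m∈ℕ} is a sequence in C₂(X) with ∑_{m} ‖ψ_m‖₂ < ∞, where ‖ψ‖₂ := ‖Φ(|ψ|²)‖_∞^{1/2}, then the series ∑_{m} ψ_m converges uniformly on X to a function ψ ∈ C₀(X), and ψ ∈ C₂(X). (In other words, C₂(X) is complete with respect to the norm ‖·‖₂.) -/

import Mathlib

open Filter Topology

/-- `F` admits a system of inverse branches centered at `x`, relative to the index
function `ind`. -/
def BranchedAt {X Y : Type*} [TopologicalSpace X] [TopologicalSpace Y]
    (F : X → Y) (ind : X → ℕ) (x : X) : Prop :=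
  ∃ (U : Set X) (V : Set Y) (g : Fin (ind x) → Y → X),
    IsOpen U ∧ x ∈ U ∧ IsOpen V ∧ F x ∈ V ∧
    (∀ i, ∀ v ∈ V, g i v ∈ U) ∧
    (∀ i, ∀ v ∈ V, F (g i v) = v) ∧
    (∀ i, g i (F x) = x) ∧
    (∀ i, ContinuousWithinAt (g i) V (F x)) ∧
    (U = ⋃ i, g i '' V) ∧
    (∀ u ∈ U, ind u = Nat.card {i : Fin (ind x) // u ∈ g i '' V})

/-- `F` is a branched function with index function `ind`. -/
def IsBranched {X Y : Type*} [TopologicalSpace X] [TopologicalSpace Y]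
    (F : X → Y) (ind : X → ℕ) : Prop :=
  Continuous F ∧ (∀ x, 0 < ind x) ∧ ∀ x, BranchedAt F ind x

/-- The transfer operator applied to `|f|²`:
`Φ(|f|²)(y) = ∑_{x ∈ F⁻¹(y)} ind_F(x)·|f(x)|²`. -/
noncomputable def transferSq {X Y : Type*} (F : X → Y) (ind : X → ℕ) (f : X → ℂ) (y : Y) : ℝ :=
  ∑' x : F ⁻¹' {y}, (ind x.1 : ℝ) * ‖f x.1‖ ^ 2

/-- Membership in `C₂(X)`: `ψ ∈ C₀(X)` and `Φ(|ψ|²)` is everywhere finite and lies in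
`C₀(Y)`. -/
def MemC2 {X Y : Type*} [TopologicalSpace X] [TopologicalSpace Y]
    (F : X → Y) (ind : X → ℕ) (ψ : X → ℂ) : Prop :=
  Continuous ψ ∧ Tendsto ψ (cocompact X) (nhds 0) ∧
  (∀ y : Y, Summable fun x : F ⁻¹' {y} => (ind x.1 : ℝ) * ‖ψ x.1‖ ^ 2) ∧
  Continuous (transferSq F ind ψ) ∧
  Tendsto (transferSq F ind ψ) (cocompact Y) (nhds 0)

/-! The bound `ind ≥ 1` gives `‖ψ_m x‖ ≤ ‖ψ_m‖₂`, so `∑ ψ_m` converges uniformly to some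
`g ∈ C₀(X)`. On a fibre `F⁻¹(y)`, `ψ ↦ √ind · ψ` is an isometry into `ℓ²`, so the partial sums
`S_N` converge to `g` in the weighted `ℓ²` norm at a rate `∑_{m ≥ N} ‖ψ_m‖₂` independent of `y`:
hence `√Φ(|g|²)` is a uniform limit of the `√Φ(|S_N|²)`. Each `S_N` lies in `C₂(X)` because `C₂(X)`
is closed under addition: for continuous `0 ≤ h ≤ k`, the inverse branches make `Φ h` and
`Φ (k - h)` lower semicontinuous, and as their sum `Φ k` is continuous, both are continuous. -/

section Transfer

variable {X Y : Type*} {F : X → Y} {ind : X → ℕ} {h k : X → ℝ}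

lemma sum_branches_eq [DecidableEq X] {n : ℕ} {U : Set X} {V : Set Y}
    {g : Fin n → Y → X} (hgU : ∀ i, ∀ v ∈ V, g i v ∈ U) (hgF : ∀ i, ∀ v ∈ V, F (g i v) = v)
    (hind : ∀ u ∈ U, ind u = Nat.card {i : Fin n // u ∈ g i '' V}) (f : X → ℝ) {v : Y}
    (hv : v ∈ V) :
    ∑ i, f (g i v) = ∑ u ∈ Finset.univ.image (g · v), (ind u : ℝ) * f u := by
  rw [Finset.sum_comp]
  refine Finset.sum_congr rfl fun u hu => ?_
  obtain ⟨j, -, rfl⟩ := Finset.mem_image.mp hu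
  have hbranch : ∀ i, g j v ∈ g i '' V ↔ g i v = g j v := by
    refine fun i => ⟨fun ⟨v', hv', he⟩ => ?_, fun he => ⟨v, hv, he⟩⟩
    obtain rfl : v' = v := by rw [← hgF i v' hv', he, hgF j v hv]
    exact he
  simp only [hind _ (hgU j v hv), hbranch, Nat.card_eq_fintype_card, Fintype.card_subtype,
    nsmul_eq_mul]

/-- `transferSq F ind ψ` is definitionally `transfer F ind fun x => ‖ψ x‖ ^ 2`. -/
noncomputable def transfer (F : X → Y) (ind : X → ℕ) (h : X → ℝ) (y : Y) : ℝ :=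
  ∑' x : F ⁻¹' {y}, (ind x.1 : ℝ) * h x.1

lemma sum_le_transfer (h0 : ∀ x, 0 ≤ h x) {y : Y}
    (hs : Summable fun x : F ⁻¹' {y} => (ind x.1 : ℝ) * h x.1) {s : Finset X}
    (hsy : ↑s ⊆ F ⁻¹' {y}) :
    ∑ u ∈ s, (ind u : ℝ) * h u ≤ transfer F ind h y := by
  classical
  rw [← Finset.sum_subtype_of_mem _ fun u hu => hsy hu]
  exact hs.sum_le_tsum _ fun x _ => mul_nonneg (Nat.cast_nonneg _) (h0 x)

lemma transfer_nonneg (h0 : ∀ x, 0 ≤ h x) (y : Y) : 0 ≤ transfer F ind h y :=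
  tsum_nonneg fun x => mul_nonneg (Nat.cast_nonneg _) (h0 x)

lemma summable_fiber_of_le (h0 : ∀ x, 0 ≤ h x) (hhk : ∀ x, h x ≤ k x) {y : Y}
    (hk : Summable fun x : F ⁻¹' {y} => (ind x.1 : ℝ) * k x.1) :
    Summable fun x : F ⁻¹' {y} => (ind x.1 : ℝ) * h x.1 :=
  hk.of_nonneg_of_le (fun x => mul_nonneg (Nat.cast_nonneg _) (h0 x))
    fun x => mul_le_mul_of_nonneg_left (hhk x) (Nat.cast_nonneg _)

lemma transfer_mono (h0 : ∀ x, 0 ≤ h x) (hhk : ∀ x, h x ≤ k x) {y : Y}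
    (hk : Summable fun x : F ⁻¹' {y} => (ind x.1 : ℝ) * k x.1) :
    transfer F ind h y ≤ transfer F ind k y :=
  (summable_fiber_of_le h0 hhk hk).tsum_le_tsum
    (fun x => mul_le_mul_of_nonneg_left (hhk x) (Nat.cast_nonneg _)) hk

lemma norm_sq_le_transferSq {ψ : X → ℂ} {x : X} (hx : 0 < ind x)
    (hs : Summable fun u : F ⁻¹' {F x} => (ind u.1 : ℝ) * ‖ψ u.1‖ ^ 2) :
    ‖ψ x‖ ^ 2 ≤ transferSq F ind ψ (F x) := calc
  ‖ψ x‖ ^ 2 ≤ (ind x : ℝ) * ‖ψ x‖ ^ 2 :=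
    le_mul_of_one_le_left (sq_nonneg _) (Nat.one_le_cast.mpr hx)
  _ ≤ transferSq F ind ψ (F x) :=
    hs.le_tsum ⟨x, rfl⟩ fun _ _ => mul_nonneg (Nat.cast_nonneg _) (sq_nonneg _)

end Transfer

lemma continuous_of_lowerSemicontinuous_of_continuous_add {α : Type*} [TopologicalSpace α]
    {f g : α → ℝ} (hf : LowerSemicontinuous f) (hg : LowerSemicontinuous g)
    (hfg : Continuous fun x => f x + g x) : Continuous f := by
  refine continuous_iff_continuousAt.mpr fun x =>
    continuousAt_iff_lower_upperSemicontinuousAt.mpr ⟨hf x, fun a ha => ?_⟩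
  set δ := (a - f x) / 2 with hδ_def
  have hδ : 0 < δ := half_pos (sub_pos.mpr ha)
  filter_upwards [hfg.continuousAt.eventually (gt_mem_nhds (lt_add_of_pos_right _ hδ)),
    hg x _ (sub_lt_self _ hδ)] with v hfgv hgv
  linarith

lemma norm_tsum_sub_sum_range_le {E : Type*} [NormedAddCommGroup E] [CompleteSpace E]
    {V : ℕ → E} {c : ℕ → ℝ} (hV : ∀ m, ‖V m‖ ≤ c m) (hc : Summable c) (N : ℕ) :
    ‖∑' m, V m - ∑ m ∈ Finset.range N, V m‖ ≤ ∑' m, c (m + N) := by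
  have hcN : Summable fun m => c (m + N) := (summable_nat_add_iff N).mpr hc
  have hVN : Summable fun m => ‖V (m + N)‖ :=
    hcN.of_nonneg_of_le (fun _ => norm_nonneg _) fun _ => hV _
  rw [← (Summable.of_norm_bounded hc hV).sum_add_tsum_nat_add N, add_sub_cancel_left]
  exact (norm_tsum_le_tsum_norm hVN).trans (hVN.tsum_le_tsum (fun _ => hV _) hcN)

section WeightedL2

variable {ι : Type*} {w : ι → ℝ}

lemma norm_ofReal_sqrt_mul_sq {a : ℝ} (ha : 0 ≤ a) (z : ℂ) :
    ‖(√a : ℂ) * z‖ ^ 2 = a * ‖z‖ ^ 2 := by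
  rw [norm_mul, mul_pow, Complex.norm_real, Real.norm_eq_abs, sq_abs, Real.sq_sqrt ha]

lemma memℓp_two_iff {E : ι → Type*} [∀ i, NormedAddCommGroup (E i)] {f : ∀ i, E i} :
    Memℓp f 2 ↔ Summable fun i => ‖f i‖ ^ 2 := by
  rw [memℓp_gen_iff (by norm_num)]
  norm_num

lemma lp.norm_two_sq {E : ι → Type*} [∀ i, NormedAddCommGroup (E i)] (V : lp E 2) :
    ‖V‖ ^ 2 = ∑' i, ‖V i‖ ^ 2 := by
  simpa using lp.norm_rpow_eq_tsum (p := 2) (by norm_num) V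

/-- The weighted `ℓ²` norms `√(∑ w i ‖f i‖²)` are the `ℓ²` norms of `√w · f`, so they satisfy the
triangle inequality for series. -/
theorem summable_weighted_sq_tsum_and_abs_sqrt_sub_le (hw : ∀ i, 0 ≤ w i)
    {f : ℕ → ι → ℂ} {c : ℕ → ℝ}
    (hf : ∀ m, Summable fun i => w i * ‖f m i‖ ^ 2)
    (hfc : ∀ m, ∑' i, w i * ‖f m i‖ ^ 2 ≤ c m ^ 2) (hc0 : ∀ m, 0 ≤ c m) (hc : Summable c) :
    (Summable fun i => w i * ‖∑' m, f m i‖ ^ 2) ∧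
      ∀ N, |√(∑' i, w i * ‖∑' m, f m i‖ ^ 2) - √(∑' i, w i * ‖∑ m ∈ Finset.range N, f m i‖ ^ 2)|
        ≤ ∑' m, c (m + N) := by
  have hnorm (f : ι → ℂ) (V : lp (fun _ : ι => ℂ) 2) (hV : ∀ i, V i = √(w i) * f i) :
      √(∑' i, w i * ‖f i‖ ^ 2) = ‖V‖ := by
    simp_rw [← norm_ofReal_sqrt_mul_sq (hw _), ← hV, ← lp.norm_two_sq,
      Real.sqrt_sq (norm_nonneg _)]
  let V m : lp (fun _ : ι => ℂ) 2 := ⟨fun i => √(w i) * f m i,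
    memℓp_two_iff.mpr <| (hf m).congr fun i => (norm_ofReal_sqrt_mul_sq (hw i) _).symm⟩
  have hVc m : ‖V m‖ ≤ c m := by
    rw [← hnorm (f m) (V m) fun i => rfl]
    exact (Real.sqrt_le_left (hc0 m)).mpr (hfc m)
  have hVs : Summable V := .of_norm_bounded hc hVc
  have hsum i : (∑' m, V m) i = √(w i) * ∑' m, f m i :=
    ((lp.evalCLM ℂ (fun _ : ι => ℂ) 2 i).map_tsum hVs).trans tsum_mul_left
  have hpartial N i : (∑ m ∈ Finset.range N, V m) i = √(w i) * ∑ m ∈ Finset.range N, f m i := by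
    rw [lp.coeFn_sum, Finset.sum_apply, Finset.mul_sum]
  refine ⟨?_, fun N => ?_⟩
  · refine (memℓp_two_iff.mp (lp.memℓp (∑' m, V m))).congr fun i => ?_
    rw [hsum, norm_ofReal_sqrt_mul_sq (hw i)]
  · rw [hnorm _ _ hsum, hnorm _ _ (hpartial N)]
    exact (abs_norm_sub_norm_le _ _).trans (norm_tsum_sub_sum_range_le hVc hc N)

end WeightedL2

section Branched

variable {X Y : Type*} [TopologicalSpace X] [TopologicalSpace Y] {F : X → Y} {ind : X → ℕ}
  {h k : X → ℝ}

lemma BranchedAt.exists_local_finsets [DecidableEq X] {x₀ : X} (hx₀ : BranchedAt F ind x₀)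
    (hh : ContinuousAt h x₀) {W : Set X} (hW : W ∈ 𝓝 x₀) :
    ∃ S : Y → Finset X, (∀ᶠ v in 𝓝 (F x₀), ↑(S v) ⊆ W ∩ F ⁻¹' {v}) ∧
      Tendsto (fun v => ∑ u ∈ S v, (ind u : ℝ) * h u) (𝓝 (F x₀)) (𝓝 (ind x₀ * h x₀)) := by
  obtain ⟨U, V, g, -, -, hVo, hFV, hgU, hgF, hgx, hgc, -, hind⟩ := hx₀
  have hgt : ∀ i, Tendsto (g i) (𝓝 (F x₀)) (𝓝 x₀) := fun i => by
    simpa only [hgx i] using ((hgc i).continuousAt (hVo.mem_nhds hFV)).tendsto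
  have hnear : ∀ᶠ v in 𝓝 (F x₀), v ∈ V ∧ ∀ i, g i v ∈ W :=
    (hVo.eventually_mem hFV).and (eventually_all.mpr fun i => hgt i hW)
  refine ⟨fun v => Finset.univ.image (g · v), ?_, ?_⟩
  · filter_upwards [hnear] with v hv
    simp only [Finset.coe_image, Finset.coe_univ, Set.image_univ]
    rintro _ ⟨i, rfl⟩
    exact ⟨hv.2 i, hgF i v hv.1⟩
  · have hlim : Tendsto (fun v => ∑ i, h (g i v)) (𝓝 (F x₀)) (𝓝 (∑ _i : Fin (ind x₀), h x₀)) :=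
      tendsto_finsetSum _ fun i _ => hh.tendsto.comp (hgt i)
    simp only [Finset.sum_const, Finset.card_univ, Fintype.card_fin, nsmul_eq_mul] at hlim
    refine hlim.congr' ?_
    filter_upwards [hnear] with v hv
    exact sum_branches_eq hgU hgF hind h hv.1

lemma exists_fiber_finsets [T2Space X] [DecidableEq X] (hF : ∀ x, BranchedAt F ind x)
    (hh : Continuous h) {y₀ : Y} (T : Finset X) (hT : ∀ x ∈ T, F x = y₀) :
    ∃ S : Y → Finset X, (∀ᶠ v in 𝓝 y₀, ↑(S v) ⊆ F ⁻¹' {v}) ∧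
      Tendsto (fun v => ∑ u ∈ S v, (ind u : ℝ) * h u) (𝓝 y₀)
        (𝓝 (∑ x ∈ T, (ind x : ℝ) * h x)) := by
  obtain ⟨W, hW, hWdisj⟩ := T.finite_toSet.t2_separation
  choose S hS hlim using fun x =>
    (hF x).exists_local_finsets hh.continuousAt ((hW x).2.mem_nhds (hW x).1)
  have hnear : ∀ᶠ v in 𝓝 y₀, ∀ x ∈ T, ↑(S x v) ⊆ W x ∩ F ⁻¹' {v} :=
    (Finset.eventually_all T).mpr fun x hx => hT x hx ▸ hS x
  refine ⟨fun v => T.biUnion (S · v), ?_, ?_⟩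
  · filter_upwards [hnear] with v hv
    simp only [Finset.coe_biUnion, Set.iUnion_subset_iff]
    exact fun x hx => (hv x hx).trans Set.inter_subset_right
  · refine (tendsto_finsetSum T fun x hx => hT x hx ▸ hlim x).congr' ?_
    filter_upwards [hnear] with v hv
    refine (Finset.sum_biUnion fun x hx x' hx' hne => ?_).symm
    exact Finset.disjoint_coe.mp <| (hWdisj hx hx' hne).mono
      ((hv x hx).trans Set.inter_subset_left) ((hv x' hx').trans Set.inter_subset_left)

lemma lowerSemicontinuous_transfer [T2Space X] (hF : ∀ x, BranchedAt F ind x)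
    (hh : Continuous h) (h0 : ∀ x, 0 ≤ h x)
    (hs : ∀ y, Summable fun x : F ⁻¹' {y} => (ind x.1 : ℝ) * h x.1) :
    LowerSemicontinuous (transfer F ind h) := by
  classical
  intro y₀ a ha
  obtain ⟨T, hT⟩ : ∃ T : Finset (F ⁻¹' {y₀}), a < ∑ x ∈ T, (ind x.1 : ℝ) * h x.1 :=
    ((hs y₀).hasSum.eventually (lt_mem_nhds ha)).exists
  replace hT := hT.trans_eq (Finset.sum_map T (Function.Embedding.subtype _)
    fun x => (ind x : ℝ) * h x).symm
  obtain ⟨S, hSF, hSlim⟩ := exists_fiber_finsets (y₀ := y₀) hF hh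
    (T.map (Function.Embedding.subtype _)) (by simp +contextual)
  filter_upwards [hSF, hSlim.eventually (lt_mem_nhds hT)] with v hvF hva
  exact hva.trans_le (sum_le_transfer h0 (hs v) hvF)

/-- `Φ h` and `Φ (k - h)` are both lower semicontinuous and add up to the continuous `Φ k`. -/
lemma continuous_transfer_of_le [T2Space X] (hF : ∀ x, BranchedAt F ind x) (hh : Continuous h)
    (hk : Continuous k) (h0 : ∀ x, 0 ≤ h x) (hhk : ∀ x, h x ≤ k x)
    (hks : ∀ y, Summable fun x : F ⁻¹' {y} => (ind x.1 : ℝ) * k x.1)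
    (hkc : Continuous (transfer F ind k)) :
    Continuous (transfer F ind h) := by
  have hhs y := summable_fiber_of_le h0 hhk (hks y)
  have hds : ∀ y, Summable fun x : F ⁻¹' {y} => (ind x.1 : ℝ) * (k x.1 - h x.1) := fun y =>
    ((hks y).sub (hhs y)).congr fun x => by ring
  refine continuous_of_lowerSemicontinuous_of_continuous_add
    (lowerSemicontinuous_transfer hF hh h0 hhs)
    (lowerSemicontinuous_transfer (h := fun x => k x - h x) hF (hk.sub hh)
      (fun x => sub_nonneg.mpr (hhk x)) hds) ?_
  convert hkc using 2 with y
  rw [transfer, transfer, transfer, ← (hhs y).tsum_add (hds y)]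
  exact tsum_congr fun x => by ring

lemma memC2_zero : MemC2 F ind fun _ => 0 := by
  have hzero : transferSq F ind (fun _ => 0) = fun _ => 0 := by
    funext y; simp [transferSq]
  exact ⟨continuous_const, tendsto_const_nhds, fun y => by simp,
    hzero ▸ continuous_const, hzero ▸ tendsto_const_nhds⟩

lemma MemC2.add [T2Space X] (hF : ∀ x, BranchedAt F ind x) {ψ φ : X → ℂ}
    (hψ : MemC2 F ind ψ) (hφ : MemC2 F ind φ) : MemC2 F ind fun x => ψ x + φ x := by
  obtain ⟨hψc, hψ0, hψs, hψtc, hψt0⟩ := hψ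
  obtain ⟨hφc, hφ0, hφs, hφtc, hφt0⟩ := hφ
  set k : X → ℝ := fun x => 2 * ‖ψ x‖ ^ 2 + 2 * ‖φ x‖ ^ 2
  have hle : ∀ x, ‖ψ x + φ x‖ ^ 2 ≤ k x := fun x =>
    (pow_le_pow_left₀ (norm_nonneg _) (norm_add_le _ _) 2).trans
      (by simpa [k, mul_add] using add_sq_le (a := ‖ψ x‖) (b := ‖φ x‖))
  have hks : ∀ y, Summable fun x : F ⁻¹' {y} => (ind x.1 : ℝ) * k x.1 := fun y =>
    (((hψs y).mul_left 2).add ((hφs y).mul_left 2)).congr fun x => by ring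
  have htk : transfer F ind k = fun y => 2 * transferSq F ind ψ y + 2 * transferSq F ind φ y := by
    funext y
    rw [transfer, transferSq, transferSq, ← tsum_mul_left, ← tsum_mul_left,
      ← ((hψs y).mul_left 2).tsum_add ((hφs y).mul_left 2)]
    exact tsum_congr fun x => by ring
  have h0 : ∀ x, 0 ≤ ‖ψ x + φ x‖ ^ 2 := fun x => sq_nonneg _
  refine ⟨hψc.add hφc, by simpa using hψ0.add hφ0,
    fun y => summable_fiber_of_le h0 hle (hks y), ?_, ?_⟩
  · refine continuous_transfer_of_le hF ((hψc.add hφc).norm.pow 2) ?_ h0 hle hks ?_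
    · exact (continuous_const.mul (hψc.norm.pow 2)).add (continuous_const.mul (hφc.norm.pow 2))
    · exact htk ▸ (continuous_const.mul hψtc).add (continuous_const.mul hφtc)
  · refine squeeze_zero (transfer_nonneg h0) (fun y => transfer_mono h0 hle (hks y)) ?_
    simpa [htk] using (hψt0.const_mul 2).add (hφt0.const_mul 2)

lemma memC2_sum [T2Space X] (hF : ∀ x, BranchedAt F ind x) {ι : Type*} {ψ : ι → X → ℂ}
    (s : Finset ι) (hψ : ∀ i ∈ s, MemC2 F ind (ψ i)) :
    MemC2 F ind fun x => ∑ i ∈ s, ψ i x := by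
  classical
  induction s using Finset.induction_on with
  | empty => simpa using memC2_zero
  | insert a s ha ih =>
    simpa only [Finset.sum_insert ha] using (hψ a (Finset.mem_insert_self a s)).add hF
      (ih fun i hi => hψ i (Finset.mem_insert_of_mem hi))

lemma memC2_of_tendstoUniformly {S : ℕ → X → ℂ} {g : X → ℂ} (hS : ∀ N, MemC2 F ind (S N))
    (hSg : TendstoUniformly S g atTop)
    (hgs : ∀ y, Summable fun x : F ⁻¹' {y} => (ind x.1 : ℝ) * ‖g x.1‖ ^ 2)
    (hnorm : TendstoUniformly (fun N y => √(transferSq F ind (S N) y))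
      (fun y => √(transferSq F ind g y)) atTop) :
    MemC2 F ind g := by
  have hsq : transferSq F ind g = fun y => √(transferSq F ind g y) ^ 2 := funext fun y =>
    (Real.sq_sqrt (transfer_nonneg (h := fun x => ‖g x‖ ^ 2) (fun _ => sq_nonneg _) y)).symm
  have hsqrt0 : Tendsto Real.sqrt (𝓝 0) (𝓝 0) := by
    simpa using Real.continuous_sqrt.tendsto 0
  have hnorm0 : Tendsto (fun y => √(transferSq F ind g y)) (cocompact Y) (𝓝 0) :=
    hnorm.tendsto_of_eventually_tendsto
      (.of_forall fun N => hsqrt0.comp (hS N).2.2.2.2) tendsto_const_nhds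
  refine ⟨hSg.continuous (.of_forall fun N => (hS N).1),
    hSg.tendsto_of_eventually_tendsto (.of_forall fun N => (hS N).2.1) tendsto_const_nhds,
    hgs, ?_, ?_⟩
  · rw [hsq]
    exact (hnorm.continuous (.of_forall fun N => (hS N).2.2.2.1.sqrt)).pow 2
  · rw [hsq]
    simpa using hnorm0.pow 2

end Branched

theorem c2_complete_general {X Y : Type*}
    [TopologicalSpace X] [T2Space X]
    [TopologicalSpace Y]
    (F : X → Y) (ind : X → ℕ) (hF : IsBranched F ind)
    (ψ : ℕ → X → ℂ) (hψ : ∀ m, MemC2 F ind (ψ m))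
    (c : ℕ → ℝ) (hc : Summable c)
    (hbound : ∀ m y, transferSq F ind (ψ m) y ≤ c m ^ 2) :
    ∃ g : X → ℂ,
      TendstoUniformly (fun N x => ∑ m ∈ Finset.range N, ψ m x) g atTop ∧
      MemC2 F ind g := by
  have hbound' m y : transferSq F ind (ψ m) y ≤ |c m| ^ 2 := sq_abs (c m) ▸ hbound m y
  have hψc m x : ‖ψ m x‖ ≤ |c m| := by
    simpa using sq_le_sq.mp <|
      (norm_sq_le_transferSq (hF.2.1 x) ((hψ m).2.2.1 _)).trans (hbound' m (F x))
  have hfiber y := summable_weighted_sq_tsum_and_abs_sqrt_sub_le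
    (w := fun x : F ⁻¹' {y} => (ind x.1 : ℝ)) (f := fun m x => ψ m x.1)
    (fun _ => Nat.cast_nonneg _) (fun m => (hψ m).2.2.1 y)
    (fun m => hbound' m y) (fun m => abs_nonneg (c m)) hc.abs
  refine ⟨fun x => ∑' m, ψ m x, tendstoUniformly_tsum_nat hc.abs hψc,
    memC2_of_tendstoUniformly (fun N => memC2_sum hF.2.2 _ fun m _ => hψ m)
      (tendstoUniformly_tsum_nat hc.abs hψc) (fun y => (hfiber y).1) ?_⟩
  refine Metric.tendstoUniformly_iff.mpr fun ε hε => ?_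
  filter_upwards [(tendsto_sum_nat_add fun m => |c m|).eventually (gt_mem_nhds hε)] with N hN y
  rw [Real.dist_eq]
  exact ((hfiber y).2 N).trans_lt hN

/-- **Completeness of `C₂(X)` (Proposition 5.5 of the paper).** If `(ψ_m)` is a
sequence in `C₂(X)` with `∑_m ‖ψ_m‖₂ < ∞`, where `‖ψ‖₂ = ‖Φ(|ψ|²)‖_∞^{1/2}`
(witnessed by a summable sequence of bounds `c m ≥ 0` with `Φ(|ψ_m|²) ≤ (c m)²`),
then `∑_m ψ_m` converges uniformly on `X` to a function `g ∈ C₀(X)`, and `g ∈ C₂(X)`. -/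
theorem c2_complete {X Y : Type*}
    [TopologicalSpace X] [T2Space X] [LocallyCompactSpace X]
    [TopologicalSpace Y] [T2Space Y] [LocallyCompactSpace Y]
    (F : X → Y) (ind : X → ℕ) (hF : IsBranched F ind)
    (ψ : ℕ → X → ℂ) (hψ : ∀ m, MemC2 F ind (ψ m))
    (c : ℕ → ℝ) (hcpos : ∀ m, 0 ≤ c m) (hc : Summable c)
    (hbound : ∀ m y, transferSq F ind (ψ m) y ≤ c m ^ 2) :
    ∃ g : X → ℂ,
      TendstoUniformly (fun N x => ∑ m ∈ Finset.range N, ψ m x) g atTop ∧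
      MemC2 F ind g :=
  c2_complete_general F ind hF ψ hψ c hc hbound
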